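/- arXiv:2403.11940 — 2 statements merged into one kernel-verified Lean document; each statement's English description precedes it below -/
import Mathlib

section
/- Let G be a strongly connected, aperiodic directed graph on a finite vertex set with diameter at most D. Then for any two vertices a and b, there exists a vertex c and an integer k ≤ 2D² + D such that there is a directed walk from c to a of length exactly k and a directed walk from c to b of length exactly k. -/
/-- There is a directed walk of length `k` from `u` to `v` along relation `R`. -/
def HasWalk {V : Type*} (R : V → V → Prop) (u v : V) (k : ℕ) : Prop :=
  ∃ f : ℕ → V, f 0 = u ∧ f k = v ∧ ∀ i < k, R (f i) (f (i + 1))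

/-!
Fix a closed walk at `a` of length `s ≤ D + 1` (one edge out of `a`, then a shortest path back).
Cutting a closed walk at `a` of length `> 2D + 1` after its first `D + 1` steps and closing both
halves with shortest paths shows that the closed-walk lengths `≤ 2D + 1` generate, as a group,
every closed-walk length, hence all of `ℤ` by aperiodicity. So the set of residues mod `s` of
closed walks of length `≤ j` cannot stay unchanged from `j` to `j + 2D + 1` unless it is invariant
under every translation, i.e. all of `ZMod s`; it therefore fills `ZMod s` by
`j = (s - 1)(2D + 1) ≤ D(2D + 1)`. A closed walk of length `ℓ ≡ d(a, b) (mod s)` and a shortest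
path `a → b`, the shorter one padded with copies of the `s`-cycle, are two walks from `a` of
length `max ℓ d(a, b) ≤ 2D² + D`.
-/

open Finset Pointwise

section Walks

variable {V : Type*} {R : V → V → Prop} {u v w : V} {j k : ℕ}

theorem hasWalk_zero_iff : HasWalk R u v 0 ↔ u = v :=
  ⟨fun ⟨_, h0, h1, _⟩ => h0 ▸ h1,
    fun h => ⟨fun _ => u, rfl, h, fun _ hi => absurd hi (Nat.not_lt_zero _)⟩⟩

theorem hasWalk_succ_iff : HasWalk R u w (k + 1) ↔ ∃ v, R u v ∧ HasWalk R v w k := by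
  constructor
  · rintro ⟨f, rfl, hk, hf⟩
    exact ⟨f 1, hf 0 k.succ_pos, fun i => f (i + 1), rfl, hk, fun i hi => hf (i + 1) (by omega)⟩
  · rintro ⟨v, huv, g, rfl, hk, hg⟩
    refine ⟨fun | 0 => u | i + 1 => g i, rfl, hk, ?_⟩
    rintro (_ | i) hi
    · exact huv
    · exact hg i (by omega)

theorem hasWalk_add_iff : HasWalk R u w (j + k) ↔ ∃ v, HasWalk R u v j ∧ HasWalk R v w k := by
  induction j generalizing u with
  | zero => simp [hasWalk_zero_iff]
  | succ j ih =>
    rw [Nat.add_right_comm, hasWalk_succ_iff]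
    simp only [ih, hasWalk_succ_iff]
    grind

theorem HasWalk.append (h₁ : HasWalk R u v j) (h₂ : HasWalk R v w k) : HasWalk R u w (j + k) :=
  hasWalk_add_iff.2 ⟨v, h₁, h₂⟩

theorem HasWalk.iterate (h : HasWalk R u u k) : ∀ n, HasWalk R u u (n * k)
  | 0 => by simpa using hasWalk_zero_iff.2 rfl
  | n + 1 => by simpa [Nat.succ_mul] using (h.iterate n).append h

theorem HasWalk.pad (hcyc : HasWalk R u u k) (h : HasWalk R u v j) {j' : ℕ} (hle : j ≤ j')
    (hmod : j ≡ j' [MOD k]) : HasWalk R u v j' := by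
  obtain ⟨n, hn⟩ := (Nat.modEq_iff_dvd' hle).1 hmod
  have := (hcyc.iterate n).append h
  rwa [mul_comm, ← hn, Nat.sub_add_cancel hle] at this

end Walks

theorem Monotone.eq_univ_of_stall {α : Type*} [Fintype α] {F : ℕ → Finset α} {c : ℕ}
    (hF : Monotone F) (hstall : ∀ j, F (j + c) ⊆ F j → F j = univ) (h₀ : (F 0).Nonempty) :
    F ((Fintype.card α - 1) * c) = univ := by
  have grow : ∀ m, F (m * c) = univ ∨ m + 1 ≤ (F (m * c)).card := by
    intro m
    induction m with
    | zero => simpa using Or.inr h₀.card_pos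
    | succ m ih =>
      rw [Nat.succ_mul]
      rcases ih with h | h
      · exact Or.inl (univ_subset_iff.1 (h ▸ hF (Nat.le_add_right _ _)))
      by_cases hsub : F (m * c + c) ⊆ F (m * c)
      · exact Or.inl (univ_subset_iff.1 (hstall _ hsub ▸ hF (Nat.le_add_right _ _)))
      · have := card_lt_card (Finset.ssubset_iff_subset_ne.2
          ⟨hF (Nat.le_add_right _ _), fun he => hsub he.symm.subset⟩)
        omega
  rcases grow (Fintype.card α - 1) with h | h
  · exact h
  · have := h₀.card_pos.trans_le (card_le_univ (F 0))
    exact eq_univ_of_card _ (le_antisymm (card_le_univ _) (by omega))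

section ClosedWalks

variable {V : Type*} {R : V → V → Prop} {a : V} {D : ℕ}

theorem HasWalk.intCast_mem_of_short (hdiam : ∀ u v : V, ∃ k ≤ D, HasWalk R u v k)
    {H : AddSubgroup ℤ} (hshort : ∀ ℓ ≤ 2 * D + 1, HasWalk R a a ℓ → (ℓ : ℤ) ∈ H) {ℓ : ℕ}
    (h : HasWalk R a a ℓ) : (ℓ : ℤ) ∈ H := by
  induction ℓ using Nat.strong_induction_on with
  | _ ℓ ih =>
  by_cases hℓ : ℓ ≤ 2 * D + 1
  · exact hshort ℓ hℓ h
  rw [← Nat.add_sub_cancel' (show D + 1 ≤ ℓ by omega)] at h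
  obtain ⟨u, hau, hua⟩ := hasWalk_add_iff.1 h
  obtain ⟨t, ht, hau'⟩ := hdiam a u
  obtain ⟨t', ht', hua'⟩ := hdiam u a
  have h₁ := hshort _ (by omega) (hau.append hua')
  have h₂ := ih _ (by omega) (hau'.append hua)
  have h₃ := hshort _ (by omega) (hau'.append hua')
  have hsplit : (ℓ : ℤ) =
      ((D + 1 + t' : ℕ) : ℤ) + ((t + (ℓ - (D + 1)) : ℕ) : ℤ) - ((t + t' : ℕ) : ℤ) := by
    push_cast; omega
  rw [hsplit]
  exact H.sub_mem (H.add_mem h₁ h₂) h₃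

theorem eq_top_of_closed_walk_lengths_mem
    (haper : ∀ d : ℕ, (∀ k, 0 < k → HasWalk R a a k → d ∣ k) → d = 1) {H : AddSubgroup ℤ}
    (hH : ∀ k, HasWalk R a a k → (k : ℤ) ∈ H) : H = ⊤ := by
  obtain ⟨g, rfl⟩ := Int.subgroup_cyclic H
  have hg : g.natAbs = 1 := haper _ fun k _ hk => by
    obtain ⟨n, hn⟩ := AddSubgroup.mem_closure_singleton.1 (hH k hk)
    exact Int.natCast_dvd_natCast.1 (Int.natAbs_dvd.2 ⟨n, by rw [← hn, smul_eq_mul, mul_comm]⟩)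
  have h₁ : (1 : ℤ) ∈ AddSubgroup.closure {g} :=
    AddSubgroup.mem_closure_singleton.2 ⟨g, by rw [smul_eq_mul, ← Int.natAbs_mul_self', hg]; rfl⟩
  exact eq_top_iff.2 fun z _ => by simpa using AddSubgroup.zsmul_mem _ h₁ z

open Classical in
noncomputable def closedWalkResidues (R : V → V → Prop) (a : V) (s j : ℕ) : Finset (ZMod s) :=
  ((range (j + 1)).filter (HasWalk R a a)).image (↑)

theorem mem_closedWalkResidues {s j : ℕ} {r : ZMod s} :
    r ∈ closedWalkResidues R a s j ↔ ∃ ℓ ≤ j, HasWalk R a a ℓ ∧ (ℓ : ZMod s) = r := by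
  simp [closedWalkResidues, and_assoc]

theorem closedWalkResidues_mono {s : ℕ} : Monotone (closedWalkResidues R a s) :=
  fun _ _ hjk _ hr =>
    let ⟨ℓ, hℓ, h, hr⟩ := mem_closedWalkResidues.1 hr
    mem_closedWalkResidues.2 ⟨ℓ, hℓ.trans hjk, h, hr⟩

theorem closedWalkResidues_eq_univ_of_subset {s : ℕ} [NeZero s]
    (hdiam : ∀ u v : V, ∃ k ≤ D, HasWalk R u v k)
    (haper : ∀ d : ℕ, (∀ k, 0 < k → HasWalk R a a k → d ∣ k) → d = 1) {j : ℕ}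
    (hsub : closedWalkResidues R a s (j + (2 * D + 1)) ⊆ closedWalkResidues R a s j) :
    closedWalkResidues R a s j = univ := by
  set S := closedWalkResidues R a s j
  let H := (AddAction.stabilizer (ZMod s) S).comap (Int.castAddHom (ZMod s))
  have hshort : ∀ ℓ ≤ 2 * D + 1, HasWalk R a a ℓ → (ℓ : ℤ) ∈ H := by
    intro ℓ hℓ h
    refine AddAction.mem_stabilizer_finset'.2 fun r hr => ?_
    obtain ⟨ℓ₀, hℓ₀, h₀, rfl⟩ := mem_closedWalkResidues.1 hr
    exact hsub (mem_closedWalkResidues.2 ⟨ℓ + ℓ₀, by omega, h.append h₀, by simp⟩)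
  have hH : H = ⊤ := eq_top_of_closed_walk_lengths_mem haper fun k hk =>
    hk.intCast_mem_of_short hdiam hshort
  refine eq_univ_of_forall fun r => ?_
  have hr : (r.val : ℤ) ∈ H := hH ▸ AddSubgroup.mem_top _
  have h₀ : (0 : ZMod s) ∈ S :=
    mem_closedWalkResidues.2 ⟨0, by omega, hasWalk_zero_iff.2 rfl, by simp⟩
  simpa using AddAction.mem_stabilizer_finset'.1 (AddSubgroup.mem_comap.1 hr) h₀

end ClosedWalks

theorem witness_distance_le_general {V : Type*} (R : V → V → Prop) (D : ℕ)
    (hout : ∀ u : V, ∃ v, R u v)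
    (hdiam : ∀ u v : V, ∃ k ≤ D, HasWalk R u v k)
    (haper : ∀ (a : V) (d : ℕ), (∀ k, 0 < k → HasWalk R a a k → d ∣ k) → d = 1)
    (a b : V) :
    ∃ (c : V) (k : ℕ), k ≤ 2 * D ^ 2 + D ∧ HasWalk R c a k ∧ HasWalk R c b k := by
  obtain ⟨q, hqD, hab⟩ := hdiam a b
  obtain ⟨x, hax⟩ := hout a
  obtain ⟨t, htD, hxa⟩ := hdiam x a
  have hcyc : HasWalk R a a (t + 1) := hasWalk_succ_iff.2 ⟨x, hax, hxa⟩
  have huniv := (closedWalkResidues_mono (R := R) (a := a) (s := t + 1)).eq_univ_of_stall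
    (fun _ => closedWalkResidues_eq_univ_of_subset hdiam (haper a))
    ⟨0, mem_closedWalkResidues.2 ⟨0, le_rfl, hasWalk_zero_iff.2 rfl, Nat.cast_zero⟩⟩
  rw [ZMod.card, Nat.add_sub_cancel] at huniv
  obtain ⟨ℓ, hℓ, haa, hℓq⟩ := mem_closedWalkResidues.1 (huniv ▸ mem_univ (q : ZMod (t + 1)))
  have hmod : ℓ ≡ q [MOD t + 1] := (ZMod.natCast_eq_natCast_iff _ _ _).1 hℓq
  have hℓD : ℓ ≤ 2 * D ^ 2 + D := by nlinarith
  rcases le_total ℓ q with h | h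
  · exact ⟨a, q, hqD.trans (Nat.le_add_left _ _), hcyc.pad haa h hmod, hab⟩
  · exact ⟨a, ℓ, hℓD, haa, hcyc.pad hab h hmod.symm⟩

/-- In a finite, strongly connected, aperiodic directed graph of diameter at most `D`,
any two vertices `a`, `b` have a common witness: a vertex `c` with walks of the same
exact length `k ≤ 2D^2 + D` to both `a` and `b`. -/
theorem witness_distance_le {V : Type*} [Fintype V] (R : V → V → Prop) (D : ℕ)
    (hout : ∀ u : V, ∃ v, R u v)
    (hdiam : ∀ u v : V, ∃ k ≤ D, HasWalk R u v k)
    (haper : ∀ (a : V) (d : ℕ), (∀ k, 0 < k → HasWalk R a a k → d ∣ k) → d = 1)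
    (a b : V) :
    ∃ (c : V) (k : ℕ), k ≤ 2 * D ^ 2 + D ∧ HasWalk R c a k ∧ HasWalk R c b k :=
  witness_distance_le_general R D hout hdiam haper a b
end

section
/- Consider the doubled transition system on 2q states {0,...,q-1} ∪ {0',...,(q-1)'} with primes p < q, q odd: T(0,L)=1, T(0,R)=(q-p+1)', T(0',L)=1', T(0',R)=q-p+1, and T(x,·)=(x+1) mod q, T(x',·)=((x+1) mod q)' for x≠0. Then under any policy assigning positive probability to both actions everywhere, the induced Markov chain is irreducible and aperiodic, and the diameter of the system is 2q-1. -/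
/-- The doubled single-loop transition system on `ZMod q × Bool`: two copies of the
`q`-cycle; taking `R` (false) at either zero-state switches copies via a shortcut. -/
def T2 (p q : ℕ) (s : ZMod q × Bool) (a : Bool) : ZMod q × Bool :=
  if s.1 = 0 then (if a then (1, s.2) else (((q - p + 1 : ℕ) : ZMod q), !s.2))
  else (s.1 + 1, s.2)

/-!
Every action advances the cycle coordinate by one, except `R` at a zero-state, which changes
copy and advances it by `1 - p`. Hence within a copy one moves from `x` to `y` in
`(y - x).val < q` steps, and into the other copy in at most `(q - 1) + 1 + (q - 1)` steps
through the shortcut. A walk crossing copies twice and returning to its start has length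
`≡ 2p (mod q)`, which is coprime to the prime `q`, while the cycle gives length `q`.
For the lower bound, the distance to `(-p)'` is bounded below by a potential that drops by
at most one per step and equals `2q - 1` at `1`.
-/

namespace HasWalk

variable {V : Type*} {R : V → V → Prop} {u v w : V} {k l : ℕ}

lemma trans (h₁ : HasWalk R u v k) (h₂ : HasWalk R v w l) : HasWalk R u w (k + l) := by
  obtain ⟨f, hf0, hfk, hf⟩ := h₁
  obtain ⟨g, hg0, hgl, hg⟩ := h₂
  refine ⟨fun i => if i ≤ k then f i else g (i - k), by simp [hf0], ?_, fun i hi => ?_⟩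
  · rcases Nat.eq_zero_or_pos l with rfl | hl
    · simp [hfk, ← hg0, hgl]
    · simp [show ¬ k + l ≤ k by omega, hgl]
  · by_cases hik : i < k
    · simpa [hik.le, show i + 1 ≤ k by omega] using hf i hik
    · have := hg (i - k) (by omega)
      rcases (show i = k ∨ k < i by omega) with rfl | hki
      · simpa [hfk, ← hg0] using this
      · simpa [hki.not_ge, show ¬ i + 1 ≤ k by omega, show i + 1 - k = i - k + 1 by omega]
          using this

lemma potential_le_add (φ : V → ℕ) (hφ : ∀ x y, R x y → φ x ≤ φ y + 1)
    (h : HasWalk R u v k) : φ u ≤ φ v + k := by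
  obtain ⟨f, rfl, rfl, hf⟩ := h
  suffices ∀ i ≤ k, φ (f 0) ≤ φ (f i) + i from this k le_rfl
  intro i
  induction i with
  | zero => simp
  | succ i ih =>
    intro hi
    have := hφ _ _ (hf i hi)
    have := ih (by omega)
    omega

end HasWalk

lemma ZMod.val_neg_one_eq {n : ℕ} [NeZero n] : (-1 : ZMod n).val = n - 1 := by
  obtain ⟨m, rfl⟩ := Nat.exists_eq_succ_of_ne_zero (NeZero.ne n)
  simp [ZMod.val_neg_one m]

lemma ZMod.val_le_val_sub_one_add_one {n : ℕ} (a : ZMod n) : a.val ≤ (a - 1).val + 1 := by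
  calc a.val = (a - 1 + 1).val := by rw [sub_add_cancel]
    _ ≤ (a - 1).val + (1 : ZMod n).val := ZMod.val_add_le _ _
    _ ≤ (a - 1).val + 1 := by
        rw [ZMod.val_one_eq_one_mod]
        exact Nat.add_le_add_left (Nat.mod_le 1 n) _

lemma Nat.Prime.not_dvd_two_mul_of_lt {p q : ℕ} (hq : q.Prime) (hp : p.Prime) (hpq : p < q) :
    ¬ q ∣ 2 * p := by
  rw [hq.dvd_mul, not_or]
  exact ⟨fun h => (Nat.le_of_dvd two_pos h).not_gt (hp.two_le.trans_lt hpq),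
    fun h => (Nat.le_of_dvd hp.pos h).not_gt hpq⟩

namespace DoubleLoop

variable {p q : ℕ}

def Adj (p q : ℕ) (s t : ZMod q × Bool) : Prop := ∃ a, T2 p q s a = t

def shortcut (p q : ℕ) : ZMod q := ((q - p + 1 : ℕ) : ZMod q)

lemma shortcut_eq (hpq : p ≤ q) : shortcut p q = 1 - p := by
  rw [shortcut, Nat.cast_add, Nat.cast_sub hpq, ZMod.natCast_self, Nat.cast_one]
  ring

lemma T2_true (s : ZMod q × Bool) : T2 p q s true = (s.1 + 1, s.2) := by
  by_cases hs : s.1 = 0 <;> simp [T2, hs]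

lemma T2_zero_false (b : Bool) : T2 p q (0, b) false = (shortcut p q, !b) := by
  simp [T2, shortcut]

lemma T2_false_of_ne_zero {s : ZMod q × Bool} (hs : s.1 ≠ 0) :
    T2 p q s false = (s.1 + 1, s.2) := by
  simp [T2, hs]

lemma adj_iff {x : ZMod q} {b : Bool} {t : ZMod q × Bool} :
    Adj p q (x, b) t ↔ t = (x + 1, b) ∨ (x = 0 ∧ t = (shortcut p q, !b)) := by
  constructor
  · rintro ⟨_ | _, rfl⟩
    · by_cases hx : x = 0
      · subst hx; exact Or.inr ⟨rfl, T2_zero_false b⟩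
      · exact Or.inl (T2_false_of_ne_zero hx)
    · exact Or.inl (T2_true _)
  · rintro (rfl | ⟨rfl, rfl⟩)
    · exact ⟨true, T2_true _⟩
    · exact ⟨false, T2_zero_false b⟩

lemma hasWalk_add (x : ZMod q) (b : Bool) (k : ℕ) :
    HasWalk (Adj p q) (x, b) (x + k, b) k :=
  ⟨fun i => (x + i, b), by simp, rfl, fun i _ => ⟨true, by simp [T2_true, add_assoc]⟩⟩

lemma hasWalk_cycle (x : ZMod q) (b : Bool) : HasWalk (Adj p q) (x, b) (x, b) q := by
  simpa using hasWalk_add (p := p) x b q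

variable [NeZero q]

lemma hasWalk_same_copy (x y : ZMod q) (b : Bool) :
    HasWalk (Adj p q) (x, b) (y, b) (y - x).val := by
  simpa using hasWalk_add (p := p) x b (y - x).val

/-- Walk to the zero-state, take the shortcut, then walk to `y` in the other copy. -/
def crossLength (p q : ℕ) [NeZero q] (x y : ZMod q) : ℕ := (-x).val + 1 + (y - shortcut p q).val

lemma hasWalk_other_copy (x y : ZMod q) (b : Bool) :
    HasWalk (Adj p q) (x, b) (y, !b) (crossLength p q x y) := by
  have hswitch : HasWalk (Adj p q) ((0 : ZMod q), b) (shortcut p q, !b) 1 :=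
    ⟨fun i => if i = 0 then (0, b) else (shortcut p q, !b), by simp, by simp,
      fun i hi => ⟨false, by simp [show i = 0 by omega, T2_zero_false]⟩⟩
  simpa [crossLength] using
    ((hasWalk_same_copy (p := p) x 0 b).trans hswitch).trans (hasWalk_same_copy _ y (!b))

lemma crossLength_le (x y : ZMod q) : crossLength p q x y ≤ 2 * q - 1 := by
  have := (-x).val_lt
  have := (y - shortcut p q).val_lt
  unfold crossLength
  omega

lemma natCast_crossLength (hpq : p ≤ q) (x y : ZMod q) :
    (crossLength p q x y : ZMod q) = y - x + p := by
  simp only [crossLength, Nat.cast_add, ZMod.natCast_zmod_val, Nat.cast_one, shortcut_eq hpq]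
  ring

lemma exists_hasWalk_le (u v : ZMod q × Bool) :
    ∃ k ≤ 2 * q - 1, HasWalk (Adj p q) u v k := by
  obtain ⟨x, b⟩ := u
  obtain ⟨y, c⟩ := v
  rcases Bool.eq_or_eq_not c b with rfl | rfl
  · exact ⟨_, by have := (y - x).val_lt; omega, hasWalk_same_copy x y c⟩
  · exact ⟨_, crossLength_le x y, hasWalk_other_copy x y b⟩

/-- Cross to `0` in the other copy and back. -/
lemma exists_closed_walk_natCast_eq (hpq : p ≤ q) (u : ZMod q × Bool) :
    ∃ k, HasWalk (Adj p q) u u k ∧ (k : ZMod q) = ((2 * p : ℕ) : ZMod q) := by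
  obtain ⟨x, b⟩ := u
  refine ⟨_, (hasWalk_other_copy x 0 b).trans (by simpa using hasWalk_other_copy 0 x (!b)), ?_⟩
  push_cast [natCast_crossLength hpq]
  ring

/-- The exact distance to `(-p)'`. -/
def potential (p q : ℕ) [NeZero q] : ZMod q × Bool → ℕ
  | (x, true) => (-(p : ZMod q) - x).val
  | (x, false) => (-x).val + q

lemma potential_le_of_adj (hpq : p ≤ q) {s t : ZMod q × Bool} (h : Adj p q s t) :
    potential p q s ≤ potential p q t + 1 := by
  obtain ⟨x, b⟩ := s
  rcases adj_iff.1 h with rfl | ⟨rfl, rfl⟩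
  · cases b
    · have := ZMod.val_le_val_sub_one_add_one (-x)
      simp only [potential, neg_add']
      omega
    · have := ZMod.val_le_val_sub_one_add_one (-(p : ZMod q) - x)
      simp only [potential, ← sub_sub]
      omega
  · cases b
    · have hneg : -(p : ZMod q) - shortcut p q = -1 := by rw [shortcut_eq hpq]; ring
      simp only [potential, Bool.not_false, hneg, ZMod.val_neg_one_eq, neg_zero, ZMod.val_zero]
      have := NeZero.pos q
      omega
    · have := (-(p : ZMod q) - 0).val_lt
      simp only [potential, Bool.not_true]
      omega

lemma two_mul_sub_one_le_of_hasWalk (hpq : p ≤ q) {k : ℕ}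
    (h : HasWalk (Adj p q) (1, false) (-p, true) k) : 2 * q - 1 ≤ k := by
  have := HasWalk.potential_le_add (potential p q) (fun _ _ => potential_le_of_adj hpq) h
  simp only [potential, ZMod.val_neg_one_eq, sub_self, ZMod.val_zero] at this
  have := NeZero.pos q
  omega

end DoubleLoop

open DoubleLoop in
theorem double_loop_properties_general (p q : ℕ) (hp : Nat.Prime p) (hq : Nat.Prime q)
    (hpq : p < q) :
    (∀ u v : ZMod q × Bool,
      ∃ k, 0 < k ∧ HasWalk (fun x y => ∃ a, T2 p q x a = y) u v k) ∧
    (∀ (u : ZMod q × Bool) (d : ℕ),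
      (∀ k, 0 < k → HasWalk (fun x y => ∃ a, T2 p q x a = y) u u k → d ∣ k) →
      d = 1) ∧
    (∀ u v : ZMod q × Bool,
      ∃ k ≤ 2 * q - 1, HasWalk (fun x y => ∃ a, T2 p q x a = y) u v k) ∧
    (∃ u v : ZMod q × Bool, ∀ k,
      HasWalk (fun x y => ∃ a, T2 p q x a = y) u v k → 2 * q - 1 ≤ k) := by
  have : NeZero q := ⟨hq.ne_zero⟩
  refine ⟨fun u v => ?_, fun u d hd => ?_, exists_hasWalk_le,
    ⟨(1, false), (-p, true), fun k => two_mul_sub_one_le_of_hasWalk hpq.le⟩⟩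
  · obtain ⟨k, -, hk⟩ := exists_hasWalk_le (p := p) u v
    exact ⟨q + k, by have := hq.pos; omega, (hasWalk_cycle u.1 u.2).trans hk⟩
  · obtain ⟨k, hk, hk2p⟩ := exists_closed_walk_natCast_eq hpq.le u
    have hqk : ¬ q ∣ k := by
      rw [← ZMod.natCast_eq_zero_iff, hk2p, ZMod.natCast_eq_zero_iff]
      exact hq.not_dvd_two_mul_of_lt hp hpq
    have hk0 : 0 < k := Nat.pos_of_ne_zero (by rintro rfl; exact hqk (dvd_zero q))
    exact Nat.eq_one_of_dvd_coprimes (hq.coprime_iff_not_dvd.2 hqk)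
      (hd q hq.pos (hasWalk_cycle u.1 u.2)) (hd k hk0 hk)

/-- For primes `p < q` with `q` odd, the doubled system is irreducible and aperiodic,
and its diameter is exactly `2q - 1`. -/
theorem double_loop_properties (p q : ℕ) (hp : Nat.Prime p) (hq : Nat.Prime q)
    (hpq : p < q) (hodd : Odd q) :
    (∀ u v : ZMod q × Bool,
      ∃ k, 0 < k ∧ HasWalk (fun x y => ∃ a, T2 p q x a = y) u v k) ∧
    (∀ (u : ZMod q × Bool) (d : ℕ),
      (∀ k, 0 < k → HasWalk (fun x y => ∃ a, T2 p q x a = y) u u k → d ∣ k) →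
      d = 1) ∧
    (∀ u v : ZMod q × Bool,
      ∃ k ≤ 2 * q - 1, HasWalk (fun x y => ∃ a, T2 p q x a = y) u v k) ∧
    (∃ u v : ZMod q × Bool, ∀ k,
      HasWalk (fun x y => ∃ a, T2 p q x a = y) u v k → 2 * q - 1 ≤ k) :=
  double_loop_properties_general p q hp hq hpq
end
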